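/- arXiv:0904.0068 — 4 statements merged into one kernel-verified Lean document; each statement's English description precedes it below -/
import Mathlib

section
/- Suppose the m×n real matrix A satisfies VSḠ_s(ξ,σ,θ) with certificate Y, where ξ ∈ (0,1), σ ≥ 0, θ ≥ 1. Let w ∈ ℝ^n with w_i ≥ 0 for all i ∈ P_+ and ‖w − w^s‖₁ ≤ μ, where w^s is obtained from w by zeroing all but the s largest-in-magnitude entries, and let y ∈ ℝ^m with ‖Aw − y‖ ≤ δ. Run the Non-Euclidean Matching Pursuit iteration with parameters τ_− = ξ/((1+ξθ)s), τ_+ = ξθ/((1+ξθ)s), τ = ξ/((1+ξ)s): v^{(0)} = 0, α_0 = (‖Yᵀy‖_{s,1} + sσδ + μ)/(1 − ρ) with ρ = ξθ/(1+ξθ), and for k ≥ 1, u = Yᵀ(y − Av^{(k−1)}), Δ_i = max(u_i − τ_−·α_{k−1} − σδ, 0) for i ∈ P_+, Δ_i = max(u_i − τ·α_{k−1} − σδ, 0) for i ∈ P_n with u_i ≥ 0, Δ_i = −max(|u_i| − τ·α_{k−1} − σδ, 0) for i ∈ P_n with u_i < 0, v^{(k)} = v^{(k−1)} + Δ, α_k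 = λ·α_{k−1} + 2sσδ + μ, where λ = max((ξ + ξθ)/(1 + ξθ), 2ξ/(1+ξ)). Then for every t ≥ 0 the iterate v^{(t)} satisfies v_i^{(t)} ≥ 0 for all i ∈ P_+ and ‖w − v^{(t)}‖₁ ≤ (2sσδ + μ)/(1 − λ) + λ^t · [ (‖Yᵀy‖_{s,1} + sσδ + μ)/(1 − ρ) − (2sσδ + μ)/(1 − λ) ]. -/
open Finset

noncomputable def normS1 {n : ℕ} (s : ℕ) (x : Fin n → ℝ) : ℝ :=
  (Finset.univ.powerset.filter (fun J : Finset (Fin n) => J.card ≤ s)).sup'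
    ⟨∅, by simp⟩ (fun J => ∑ i ∈ J, |x i|)

noncomputable def dualNorm {m : ℕ} (N : (Fin m → ℝ) → ℝ) (v : Fin m → ℝ) : ℝ :=
  sSup {r : ℝ | ∃ x : Fin m → ℝ, N x ≤ 1 ∧ r = ∑ k, v k * x k}

def IsNorm {m : ℕ} (N : (Fin m → ℝ) → ℝ) : Prop :=
  (∀ x y, N (x + y) ≤ N x + N y) ∧ (∀ (c : ℝ) (x), N (c • x) = |c| * N x) ∧
  (∀ x, N x = 0 → x = 0)

def SemiGood {m n : ℕ} (A : Matrix (Fin m) (Fin n) ℝ) (Pplus : Finset (Fin n)) (s : ℕ) : Prop :=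
  ∀ w : Fin n → ℝ,
    (Finset.univ.filter (fun i => w i ≠ 0)).card ≤ s →
    (∀ i ∈ Pplus, 0 ≤ w i) →
    ∀ z : Fin n → ℝ, A.mulVec z = A.mulVec w → (∀ i ∈ Pplus, 0 ≤ z i) →
      (∑ i, |z i|) ≤ (∑ i, |w i|) → z = w

def SGCond {m n : ℕ} (A : Matrix (Fin m) (Fin n) ℝ) (Pplus : Finset (Fin n))
    (s : ℕ) (ξ θ : ℝ) : Prop :=
  ∀ x : Fin n → ℝ, A.mulVec x = 0 → ∀ J : Finset (Fin n), J.card ≤ s →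
    ∑ i ∈ J ∩ Pplus, x i + ∑ i ∈ J ∩ Pplusᶜ, |x i| ≤
      ξ * (∑ i ∈ Pplusᶜ \ J, |x i| + ∑ i ∈ Pplus \ J, max (-x i) (θ * x i))

def SGbCond {m n : ℕ} (A : Matrix (Fin m) (Fin n) ℝ) (Pplus : Finset (Fin n))
    (s : ℕ) (ξ θ β : ℝ) (N : (Fin m → ℝ) → ℝ) : Prop :=
  ∀ x : Fin n → ℝ, ∀ J : Finset (Fin n), J.card ≤ s →
    ∑ i ∈ J ∩ Pplus, x i + ∑ i ∈ J ∩ Pplusᶜ, |x i| ≤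
      β * N (A.mulVec x) +
        ξ * (∑ i ∈ Pplusᶜ \ J, |x i| + ∑ i ∈ Pplus \ J, max (-x i) (θ * x i))

def SGbCondSign {m n : ℕ} (A : Matrix (Fin m) (Fin n) ℝ) (Pplus : Finset (Fin n))
    (s : ℕ) (ξ β : ℝ) (N : (Fin m → ℝ) → ℝ) : Prop :=
  ∀ J : Finset (Fin n), J.card ≤ s →
    ∀ x : Fin n → ℝ, (∀ i ∈ Pplus \ J, x i ≤ 0) →
      ∑ i ∈ J ∩ Pplus, x i + ∑ i ∈ J ∩ Pplusᶜ, |x i| ≤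
        β * N (A.mulVec x) + ξ * ∑ i ∈ Jᶜ, |x i|

noncomputable def Phi {n : ℕ} (Pplus : Finset (Fin n)) (s : ℕ) (ξ θ : ℝ)
    (x : Fin n → ℝ) : ℝ :=
  normS1 s (fun i => if i ∈ Pplus then (1 + θ * ξ) * max (x i) 0 else (1 + ξ) * |x i|)

def VSGCert {m n : ℕ} (A : Matrix (Fin m) (Fin n) ℝ) (Pplus : Finset (Fin n))
    (s : ℕ) (ξ θ ρ σ : ℝ) (N : (Fin m → ℝ) → ℝ)
    (Y : Matrix (Fin m) (Fin n) ℝ) (v : Fin m → ℝ) : Prop :=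
  (∀ i, Phi Pplus s ξ θ (fun j => -((1 - Y.transpose * A : Matrix (Fin n) (Fin n) ℝ) j i)) + (A.transpose.mulVec v) i ≤ ξ) ∧
  (∀ i ∉ Pplus, Phi Pplus s ξ θ (fun j => (1 - Y.transpose * A : Matrix (Fin n) (Fin n) ℝ) j i) - (A.transpose.mulVec v) i ≤ ξ) ∧
  (∀ i ∈ Pplus, Phi Pplus s ξ θ (fun j => (1 - Y.transpose * A : Matrix (Fin n) (Fin n) ℝ) j i) - (A.transpose.mulVec v) i ≤ θ * ξ) ∧
  (∀ i, dualNorm N (fun k => Y k i) ≤ σ) ∧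
  dualNorm N v ≤ ρ

def VSG {m n : ℕ} (A : Matrix (Fin m) (Fin n) ℝ) (Pplus : Finset (Fin n))
    (s : ℕ) (ξ θ ρ σ : ℝ) (N : (Fin m → ℝ) → ℝ) : Prop :=
  ∃ (Y : Matrix (Fin m) (Fin n) ℝ) (v : Fin m → ℝ), VSGCert A Pplus s ξ θ ρ σ N Y v

def VSGbarCert {m n : ℕ} (A : Matrix (Fin m) (Fin n) ℝ) (Pplus : Finset (Fin n))
    (s : ℕ) (ξ σ θ : ℝ) (N : (Fin m → ℝ) → ℝ) (Y : Matrix (Fin m) (Fin n) ℝ) : Prop :=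
  (∀ i, dualNorm N (fun k => Y k i) ≤ σ) ∧
  (∀ i ∉ Pplus, ∀ j, |(1 - Y.transpose * A : Matrix (Fin n) (Fin n) ℝ) i j| ≤ ξ / ((1 + ξ) * s)) ∧
  (∀ i ∈ Pplus, ∀ j ∉ Pplus,
    -(ξ / ((1 + ξ * θ) * s)) ≤ (1 - Y.transpose * A : Matrix (Fin n) (Fin n) ℝ) i j ∧
      (1 - Y.transpose * A : Matrix (Fin n) (Fin n) ℝ) i j ≤ ξ / ((1 + ξ * θ) * s)) ∧
  (∀ i ∈ Pplus, ∀ j ∈ Pplus,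
    -(ξ / ((1 + ξ * θ) * s)) ≤ (1 - Y.transpose * A : Matrix (Fin n) (Fin n) ℝ) i j ∧
      (1 - Y.transpose * A : Matrix (Fin n) (Fin n) ℝ) i j ≤ ξ * θ / ((1 + ξ * θ) * s))

/-!
Write `B = 1 - Yᵀ A` and `g = w - v` for the error of an iterate. The correlation
`u = Yᵀ (y - A v)` equals `g + Yᵀ (y - A w) - B g`; the certificate bounds the noise term
`Yᵀ (y - A w)` entrywise by `σ δ` and `B g` entrywise by the thresholds times `‖g‖₁`. So while
`‖g‖₁ ≤ α`, thresholding `u` never overshoots: every entry of the new error lies between `0` and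
the old one (hence is dominated by `|wᵢ|`, and stays nonnegative on `P₊`) and is of size at most
about `τ α + σ δ`. On the `s` largest entries of `w` this gives mass `≤ λ α + 2 s σ δ`, on the others
at most the tail `μ` of `w`, so `‖g‖₁ ≤ α_k` persists. The same identity at `v = 0` gives
`‖w‖₁ ≤ α₀`, and solving the affine recursion for `α` gives the bound.
-/

open Matrix

namespace IsNorm

variable {m : ℕ} {N : (Fin m → ℝ) → ℝ}

lemma map_zero (hN : IsNorm N) : N 0 = 0 := by
  simpa using hN.2.1 0 0

lemma map_neg (hN : IsNorm N) (x : Fin m → ℝ) : N (-x) = N x := by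
  simpa using hN.2.1 (-1) x

lemma nonneg (hN : IsNorm N) (x : Fin m → ℝ) : 0 ≤ N x := by
  have h := hN.1 x (-x)
  rw [add_neg_cancel, hN.map_zero, hN.map_neg] at h
  linarith

end IsNorm

/-- `dualNorm N v` is an `sSup`, the junk value `0` unless the pairings with the `N`-unit ball are
bounded. They are, because on this copy of `Fin m → ℝ` normed by `N` every linear functional is
continuous by finite-dimensionality. -/
def NormedBy {m : ℕ} (_N : (Fin m → ℝ) → ℝ) : Type := Fin m → ℝ

namespace NormedBy

variable {m : ℕ} {N : (Fin m → ℝ) → ℝ}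

instance : AddCommGroup (NormedBy N) := inferInstanceAs (AddCommGroup (Fin m → ℝ))
instance : Module ℝ (NormedBy N) := inferInstanceAs (Module ℝ (Fin m → ℝ))
instance : FiniteDimensional ℝ (NormedBy N) := inferInstanceAs (FiniteDimensional ℝ (Fin m → ℝ))
instance : Norm (NormedBy N) := ⟨N⟩

lemma normedSpaceCore (hN : IsNorm N) : NormedSpace.Core ℝ (NormedBy N) where
  norm_nonneg := hN.nonneg
  norm_smul := hN.2.1
  norm_triangle := hN.1
  norm_eq_zero_iff x := ⟨hN.2.2 x, fun h => h ▸ hN.map_zero⟩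

end NormedBy

namespace IsNorm

variable {m : ℕ} {N : (Fin m → ℝ) → ℝ}

lemma exists_abs_dotProduct_le (hN : IsNorm N) (v : Fin m → ℝ) :
    ∃ C, 0 ≤ C ∧ ∀ x, |v ⬝ᵥ x| ≤ C * N x := by
  let _ := NormedAddCommGroup.ofCore (NormedBy.normedSpaceCore hN)
  let _ := NormedSpace.ofCore (NormedBy.normedSpaceCore hN)
  let f : NormedBy N →L[ℝ] ℝ := LinearMap.toContinuousLinearMap (dotProductBilin ℝ ℝ v)
  exact ⟨‖f‖, norm_nonneg f, f.le_opNorm⟩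

lemma abs_dotProduct_le (hN : IsNorm N) (v x : Fin m → ℝ) :
    |v ⬝ᵥ x| ≤ dualNorm N v * N x := by
  obtain ⟨C, hC₀, hC⟩ := hN.exists_abs_dotProduct_le v
  have hle : ∀ z, N z ≤ 1 → v ⬝ᵥ z ≤ dualNorm N v := fun z hz =>
    le_csSup ⟨C, by
      rintro r ⟨z, hz, rfl⟩
      exact (le_abs_self (v ⬝ᵥ z)).trans ((hC z).trans (mul_le_of_le_one_right hC₀ hz))⟩
      ⟨z, hz, rfl⟩
  rcases (hN.nonneg x).eq_or_lt with h0 | hpos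
  · simp [hN.2.2 x h0.symm, hN.map_zero]
  · have hunit : N ((N x)⁻¹ • x) ≤ 1 := by
      rw [hN.2.1, abs_of_pos (inv_pos.mpr hpos), inv_mul_cancel₀ hpos.ne']
    have h₁ := hle _ hunit
    have h₂ := hle _ ((hN.map_neg _).trans_le hunit)
    rw [dotProduct_smul, smul_eq_mul, inv_mul_le_iff₀ hpos] at h₁
    rw [dotProduct_neg, dotProduct_smul, smul_eq_mul, ← mul_neg, inv_mul_le_iff₀ hpos] at h₂
    rw [abs_le]
    constructor <;> linarith

end IsNorm

lemma affine_recurrence_eq {a : ℕ → ℝ} {r c : ℝ} (hr : r ≠ 1)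
    (h : ∀ k, a (k + 1) = r * a k + c) (t : ℕ) :
    a t = c / (1 - r) + r ^ t * (a 0 - c / (1 - r)) := by
  have hr' : 1 - r ≠ 0 := sub_ne_zero.mpr hr.symm
  induction t with
  | zero => ring
  | succ k ih =>
    rw [h k, ih]
    field_simp
    ring

lemma natCast_mul_div_mul_natCast_le {a b : ℝ} (h : 0 ≤ a / b) (s : ℕ) :
    s * (a / (b * s)) ≤ a / b := by
  rcases Nat.eq_zero_or_pos s with rfl | hs
  · simpa using h
  · rw [div_mul_eq_div_div, mul_div_cancel₀ _ (by positivity)]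

section TopSum

variable {n : ℕ} (s : ℕ)

lemma exists_normS1_eq (x : Fin n → ℝ) :
    ∃ J : Finset (Fin n), J.card ≤ s ∧ normS1 s x = ∑ i ∈ J, |x i| := by
  obtain ⟨J, hJ, hEq⟩ := Finset.exists_mem_eq_sup' _ (fun J => ∑ i ∈ J, |x i|)
  exact ⟨J, (Finset.mem_filter.mp hJ).2, hEq⟩

lemma sum_abs_le_normS1 (x : Fin n → ℝ) {J : Finset (Fin n)} (hJ : J.card ≤ s) :
    ∑ i ∈ J, |x i| ≤ normS1 s x :=
  Finset.le_sup' (fun J => ∑ i ∈ J, |x i|) (by simp [hJ])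

lemma sum_abs_le_card_mul {x : Fin n → ℝ} {M : ℝ} (hM : 0 ≤ M) (hx : ∀ i, |x i| ≤ M)
    {J : Finset (Fin n)} (hJ : J.card ≤ s) : ∑ i ∈ J, |x i| ≤ s * M :=
  calc ∑ i ∈ J, |x i| ≤ J.card * M := by simpa using Finset.sum_le_sum fun i _ => hx i
    _ ≤ s * M := by gcongr

lemma normS1_le_of_abs_le_add {x z : Fin n → ℝ} {c : ℝ} (hc : 0 ≤ c)
    (h : ∀ i, |x i| ≤ |z i| + c) : normS1 s x ≤ normS1 s z + s * c := by
  obtain ⟨J, hJ, hx⟩ := exists_normS1_eq s x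
  calc normS1 s x ≤ ∑ i ∈ J, (|z i| + c) := hx ▸ Finset.sum_le_sum fun i _ => h i
    _ = ∑ i ∈ J, |z i| + J.card * c := by simp [Finset.sum_add_distrib]
    _ ≤ normS1 s z + s * c := by gcongr; exact sum_abs_le_normS1 s z hJ

lemma sum_abs_le_of_abs_le {x w : Fin n → ℝ} {M : ℝ} (hM : 0 ≤ M) (hxM : ∀ i, |x i| ≤ M)
    (hxw : ∀ i, |x i| ≤ |w i|) : ∑ i, |x i| ≤ s * M + (∑ i, |w i| - normS1 s w) := by
  obtain ⟨J, hJ, hw⟩ := exists_normS1_eq s w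
  have htail : ∑ i ∈ Jᶜ, |x i| ≤ ∑ i ∈ Jᶜ, |w i| := Finset.sum_le_sum fun i _ => hxw i
  rw [← Finset.sum_add_sum_compl J, ← Finset.sum_add_sum_compl J (fun i => |w i|), hw]
  linarith [sum_abs_le_card_mul s hM hxM hJ]

end TopSum

section Thresholding

noncomputable def softThreshold (t u : ℝ) : ℝ :=
  if 0 ≤ u then max (u - t) 0 else -max (|u| - t) 0

lemma sub_max_sub_zero_bounds {g u t t' : ℝ} (hg : 0 ≤ g) (h : u - g ≤ t) (h' : g - u ≤ t') :
    0 ≤ g - max (u - t) 0 ∧ g - max (u - t) 0 ≤ g ∧ g - max (u - t) 0 ≤ t + t' := by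
  rcases le_total (u - t) 0 with hu | hu
  · simp only [max_eq_right hu]; refine ⟨?_, ?_, ?_⟩ <;> linarith
  · simp only [max_eq_left hu]; refine ⟨?_, ?_, ?_⟩ <;> linarith

lemma abs_sub_softThreshold_le {g u t : ℝ} (h : |u - g| ≤ t) :
    |g - softThreshold t u| ≤ |g| ∧ |g - softThreshold t u| ≤ 2 * t := by
  obtain ⟨h₁, h₂⟩ := abs_le.mp h
  unfold softThreshold
  split_ifs with hu
  · rcases le_total (u - t) 0 with hut | hut
    · simp only [max_eq_right hut, sub_zero]
      exact ⟨le_rfl, abs_le.mpr ⟨by linarith, by linarith⟩⟩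
    · simp only [max_eq_left hut]
      rw [abs_of_nonneg (by linarith : 0 ≤ g - (u - t)), abs_of_nonneg (by linarith : 0 ≤ g)]
      constructor <;> linarith
  · rw [abs_of_neg (not_le.mp hu)]
    rcases le_total (-u - t) 0 with hut | hut
    · simp only [max_eq_right hut, neg_zero, sub_zero]
      exact ⟨le_rfl, abs_le.mpr ⟨by linarith, by linarith⟩⟩
    · simp only [max_eq_left hut]
      rw [abs_of_nonpos (by linarith : g - -(-u - t) ≤ 0), abs_of_nonpos (by linarith : g ≤ 0)]
      constructor <;> linarith

end Thresholding

section Pursuit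

variable {n : ℕ}

lemma mulVec_apply_le_mul_sum_abs {B : Matrix (Fin n) (Fin n) ℝ} {g : Fin n → ℝ} {i : Fin n}
    {c : ℝ} (h : ∀ j, B i j * g j ≤ c * |g j|) : (B *ᵥ g) i ≤ c * ∑ j, |g j| := by
  change ∑ j, B i j * g j ≤ _
  rw [Finset.mul_sum]
  exact Finset.sum_le_sum fun j _ => h j

lemma mul_le_mul_abs_of_abs_le {b x c : ℝ} (h : |b| ≤ c) : b * x ≤ c * |x| :=
  calc b * x ≤ |b| * |x| := (le_abs_self _).trans (abs_mul b x).le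
    _ ≤ c * |x| := by gcongr

/-- The entry bounds of `VSGbarCert` on `B = 1 - Yᵀ A`, with `τm, τp, τ` for the paper's
`τ₋ = ξ/((1+ξθ)s)`, `τ₊ = ξθ/((1+ξθ)s)`, `τ = ξ/((1+ξ)s)`. -/
structure EntryBounds (B : Matrix (Fin n) (Fin n) ℝ) (P : Finset (Fin n)) (τm τp τ : ℝ) :
    Prop where
  row_compl : ∀ i ∉ P, ∀ j, |B i j| ≤ τ
  row_mem_col_compl : ∀ i ∈ P, ∀ j ∉ P, |B i j| ≤ τm
  row_mem_col_mem : ∀ i ∈ P, ∀ j ∈ P, -τm ≤ B i j ∧ B i j ≤ τp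

/-- The increment `Δ` of the iteration, with thresholds `tP = τ₋ α + σ δ` on `P` and
`t = τ α + σ δ` off `P`. -/
noncomputable def pursuitStep (P : Finset (Fin n)) (tP t : ℝ) (u : Fin n → ℝ) : Fin n → ℝ :=
  fun i => if i ∈ P then max (u i - tP) 0 else softThreshold t (u i)

def IsDominatedError (P : Finset (Fin n)) (w g : Fin n → ℝ) : Prop :=
  (∀ i ∈ P, 0 ≤ g i) ∧ ∀ i, |g i| ≤ |w i|

namespace EntryBounds

variable {B : Matrix (Fin n) (Fin n) ℝ} {P : Finset (Fin n)} {τm τp τ : ℝ}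

lemma mulVec_apply_le (hB : EntryBounds B P τm τp τ) (hτ : τm ≤ τp) {g : Fin n → ℝ}
    (hg : ∀ j ∈ P, 0 ≤ g j) {i : Fin n} (hi : i ∈ P) : (B *ᵥ g) i ≤ τp * ∑ j, |g j| := by
  refine mulVec_apply_le_mul_sum_abs fun j => ?_
  by_cases hj : j ∈ P
  · rw [abs_of_nonneg (hg j hj)]
    exact mul_le_mul_of_nonneg_right (hB.row_mem_col_mem i hi j hj).2 (hg j hj)
  · exact mul_le_mul_abs_of_abs_le ((hB.row_mem_col_compl i hi j hj).trans hτ)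

lemma neg_le_mulVec_apply (hB : EntryBounds B P τm τp τ) {g : Fin n → ℝ}
    (hg : ∀ j ∈ P, 0 ≤ g j) {i : Fin n} (hi : i ∈ P) : -(τm * ∑ j, |g j|) ≤ (B *ᵥ g) i := by
  rw [neg_le, ← Pi.neg_apply, ← Matrix.neg_mulVec]
  refine mulVec_apply_le_mul_sum_abs fun j => ?_
  by_cases hj : j ∈ P
  · rw [abs_of_nonneg (hg j hj), Matrix.neg_apply]
    exact mul_le_mul_of_nonneg_right (neg_le.mp (hB.row_mem_col_mem i hi j hj).1) (hg j hj)
  · exact mul_le_mul_abs_of_abs_le ((abs_neg (B i j)).trans_le (hB.row_mem_col_compl i hi j hj))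

lemma abs_mulVec_apply_le (hB : EntryBounds B P τm τp τ) (g : Fin n → ℝ) {i : Fin n}
    (hi : i ∉ P) : |(B *ᵥ g) i| ≤ τ * ∑ j, |g j| := by
  have hrow := hB.row_compl i hi
  refine abs_le.mpr ⟨?_, mulVec_apply_le_mul_sum_abs fun j => mul_le_mul_abs_of_abs_le (hrow j)⟩
  rw [neg_le, ← Pi.neg_apply, ← Matrix.neg_mulVec]
  exact mulVec_apply_le_mul_sum_abs fun j =>
    mul_le_mul_abs_of_abs_le ((abs_neg (B i j)).trans_le (hrow j))

lemma abs_mulVec_apply_le_of_nonneg (hB : EntryBounds B P τm τp τ) (hτm : τm ≤ τp)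
    (hτ : τ ≤ τp) {w : Fin n → ℝ} (hw : ∀ j ∈ P, 0 ≤ w j) (i : Fin n) :
    |(B *ᵥ w) i| ≤ τp * ∑ j, |w j| := by
  have hw₀ : 0 ≤ ∑ j, |w j| := Finset.sum_nonneg fun j _ => abs_nonneg (w j)
  by_cases hi : i ∈ P
  · refine abs_le.mpr ⟨?_, hB.mulVec_apply_le hτm hw hi⟩
    nlinarith [hB.neg_le_mulVec_apply hw hi]
  · nlinarith [hB.abs_mulVec_apply_le w hi]

lemma sub_pursuitStep_apply_of_mem (hB : EntryBounds B P τm τp τ) (hτm : 0 ≤ τm)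
    (hτ : τm ≤ τp) {g E : Fin n → ℝ} {ε a : ℝ} {i : Fin n} (hE : |E i| ≤ ε)
    (hg : ∀ j ∈ P, 0 ≤ g j) (ha : ∑ j, |g j| ≤ a) (hi : i ∈ P) :
    let d := (g - pursuitStep P (τm * a + ε) (τ * a + ε) (E + g - B *ᵥ g)) i
    0 ≤ d ∧ d ≤ g i ∧ d ≤ (τm + τp) * a + 2 * ε := by
  have hup := hB.mulVec_apply_le hτ hg hi
  have hlo := hB.neg_le_mulVec_apply hg hi
  have hτp : τp * ∑ j, |g j| ≤ τp * a := by gcongr; linarith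
  have hτm' : τm * ∑ j, |g j| ≤ τm * a := by gcongr
  obtain ⟨hE₁, hE₂⟩ := abs_le.mp hE
  have := sub_max_sub_zero_bounds (u := (E + g - B *ᵥ g) i) (t := τm * a + ε)
    (t' := τp * a + ε) (hg i hi) (by simp only [Pi.add_apply, Pi.sub_apply]; linarith)
    (by simp only [Pi.add_apply, Pi.sub_apply]; linarith)
  simp only [pursuitStep, Pi.sub_apply, if_pos hi] at this ⊢
  exact ⟨this.1, this.2.1, by linarith [this.2.2]⟩

lemma sub_pursuitStep_apply_of_not_mem (hB : EntryBounds B P τm τp τ) (hτ : 0 ≤ τ)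
    {g E : Fin n → ℝ} {ε a : ℝ} {i : Fin n} (hE : |E i| ≤ ε) (ha : ∑ j, |g j| ≤ a)
    (hi : i ∉ P) :
    let d := (g - pursuitStep P (τm * a + ε) (τ * a + ε) (E + g - B *ᵥ g)) i
    |d| ≤ |g i| ∧ |d| ≤ 2 * (τ * a + ε) := by
  have hBg := hB.abs_mulVec_apply_le g hi
  have hτ' : τ * ∑ j, |g j| ≤ τ * a := by gcongr
  simp only [pursuitStep, Pi.sub_apply, if_neg hi]
  refine abs_sub_softThreshold_le ?_
  calc |(E + g - B *ᵥ g) i - g i| = |E i - (B *ᵥ g) i| := by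
        simp only [Pi.add_apply, Pi.sub_apply]; ring_nf
    _ ≤ |E i| + |(B *ᵥ g) i| := abs_sub _ _
    _ ≤ τ * a + ε := by linarith

theorem isDominatedError_sub_pursuitStep (hB : EntryBounds B P τm τp τ) (hτm : 0 ≤ τm)
    (hτ : τm ≤ τp) (hτ₀ : 0 ≤ τ) {s : ℕ} {lam ε μ a : ℝ} {g w E : Fin n → ℝ}
    (hlam₁ : s * (τm + τp) ≤ lam) (hlam₂ : 2 * s * τ ≤ lam) (hε : 0 ≤ ε)
    (hE : ∀ i, |E i| ≤ ε) (hμ : ∑ i, |w i| - normS1 s w ≤ μ)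
    (hg : IsDominatedError P w g) (ha : ∑ j, |g j| ≤ a) :
    let g' := g - pursuitStep P (τm * a + ε) (τ * a + ε) (E + g - B *ᵥ g)
    IsDominatedError P w g' ∧ ∑ i, |g' i| ≤ lam * a + 2 * s * ε + μ := by
  intro g'
  have ha₀ : 0 ≤ a := (Finset.sum_nonneg fun j _ => abs_nonneg (g j)).trans ha
  have hpos (i) (hi : i ∈ P) := hB.sub_pursuitStep_apply_of_mem hτm hτ (hE i) hg.1 ha hi
  have hneg (i) (hi : i ∉ P) := hB.sub_pursuitStep_apply_of_not_mem hτ₀ (hE i) ha hi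
  set M := max ((τm + τp) * a + 2 * ε) (2 * (τ * a + ε))
  have hdom : ∀ i, |g' i| ≤ |g i| ∧ |g' i| ≤ M := fun i => by
    by_cases hi : i ∈ P
    · obtain ⟨h₀, h₁, h₂⟩ := hpos i hi
      rw [abs_of_nonneg h₀, abs_of_nonneg (hg.1 i hi)]
      exact ⟨h₁, h₂.trans (le_max_left _ _)⟩
    · obtain ⟨h₁, h₂⟩ := hneg i hi
      exact ⟨h₁, h₂.trans (le_max_right _ _)⟩
  refine ⟨⟨fun i hi => (hpos i hi).1, fun i => (hdom i).1.trans (hg.2 i)⟩, ?_⟩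
  have hM : s * M ≤ lam * a + 2 * s * ε := by
    rw [mul_max_of_nonneg _ _ (Nat.cast_nonneg s)]
    apply max_le <;> nlinarith
  have := sum_abs_le_of_abs_le s (by positivity) (fun i => (hdom i).2)
    (fun i => (hdom i).1.trans (hg.2 i))
  linarith

lemma sum_abs_le_of_eq_sub_mulVec (hB : EntryBounds B P τm τp τ) (hτm₀ : 0 ≤ τm)
    (hτm : τm ≤ τp) (hτ : τ ≤ τp) {s : ℕ} {ρ ε μ : ℝ} {u w E : Fin n → ℝ}
    (hρ : s * τp ≤ ρ) (hρ₁ : ρ < 1) (hε : 0 ≤ ε) (hE : ∀ i, |E i| ≤ ε)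
    (hw : ∀ j ∈ P, 0 ≤ w j) (hμ : ∑ i, |w i| - normS1 s w ≤ μ) (hu : u = E + w - B *ᵥ w) :
    ∑ i, |w i| ≤ (normS1 s u + s * ε + μ) / (1 - ρ) := by
  have hw₀ : 0 ≤ ∑ j, |w j| := Finset.sum_nonneg fun j _ => abs_nonneg (w j)
  have hentry (i) : |w i| ≤ |u i| + (ε + τp * ∑ j, |w j|) := by
    have hwi : w i = u i - E i + (B *ᵥ w) i := by simp [hu]; ring
    rw [hwi]
    linarith [abs_add_le (u i - E i) ((B *ᵥ w) i), abs_sub (u i) (E i), hE i,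
      hB.abs_mulVec_apply_le_of_nonneg hτm hτ hw i]
  have := normS1_le_of_abs_le_add s (by nlinarith) hentry
  rw [le_div_iff₀ (by linarith)]
  nlinarith

end EntryBounds

end Pursuit

lemma transpose_mulVec_sub_mulVec {m n : ℕ} (A Y : Matrix (Fin m) (Fin n) ℝ)
    (y : Fin m → ℝ) (w v : Fin n → ℝ) :
    Yᵀ *ᵥ (y - A *ᵥ v) = Yᵀ *ᵥ (y - A *ᵥ w) + (w - v) - (1 - Yᵀ * A) *ᵥ (w - v) := by
  rw [sub_mulVec, one_mulVec, ← mulVec_mulVec, mulVec_sub A w v, mulVec_sub, mulVec_sub,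
    mulVec_sub]
  abel

namespace VSGbarCert

variable {m n : ℕ} {A Y : Matrix (Fin m) (Fin n) ℝ} {P : Finset (Fin n)} {s : ℕ} {ξ σ θ : ℝ}
  {N : (Fin m → ℝ) → ℝ}

lemma entryBounds (hY : VSGbarCert A P s ξ σ θ N Y) :
    EntryBounds (1 - Yᵀ * A) P (ξ / ((1 + ξ * θ) * s)) (ξ * θ / ((1 + ξ * θ) * s))
      (ξ / ((1 + ξ) * s)) where
  row_compl := hY.2.1
  row_mem_col_compl i hi j hj := abs_le.mpr (hY.2.2.1 i hi j hj)
  row_mem_col_mem := hY.2.2.2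

lemma abs_transpose_mulVec_apply_le (hY : VSGbarCert A P s ξ σ θ N Y) (hN : IsNorm N)
    (r : Fin m → ℝ) (i : Fin n) : |(Yᵀ *ᵥ r) i| ≤ σ * N r :=
  (hN.abs_dotProduct_le (fun k => Y k i) r).trans
    (mul_le_mul_of_nonneg_right (hY.1 i) (hN.nonneg r))

end VSGbarCert

theorem isDominatedError_matchingPursuit {m n : ℕ} {A Y : Matrix (Fin m) (Fin n) ℝ}
    {P : Finset (Fin n)} {s : ℕ} {τm τp τ lam ρ ε μ : ℝ} {w : Fin n → ℝ} {y : Fin m → ℝ}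
    {v : ℕ → Fin n → ℝ} {α : ℕ → ℝ}
    (hB : EntryBounds (1 - Yᵀ * A) P τm τp τ) (hτm₀ : 0 ≤ τm) (hτm : τm ≤ τp) (hτ₀ : 0 ≤ τ)
    (hτ : τ ≤ τp) (hlam₁ : s * (τm + τp) ≤ lam) (hlam₂ : 2 * s * τ ≤ lam) (hρ : s * τp ≤ ρ)
    (hρ₁ : ρ < 1) (hε : 0 ≤ ε) (hE : ∀ i, |(Yᵀ *ᵥ (y - A *ᵥ w)) i| ≤ ε)
    (hw : ∀ i ∈ P, 0 ≤ w i) (hμ : ∑ i, |w i| - normS1 s w ≤ μ)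
    (hv0 : v 0 = 0) (hα0 : α 0 = (normS1 s (Yᵀ *ᵥ y) + s * ε + μ) / (1 - ρ))
    (hvk : ∀ k, v (k + 1) =
      v k + pursuitStep P (τm * α k + ε) (τ * α k + ε) (Yᵀ *ᵥ (y - A *ᵥ v k)))
    (hαk : ∀ k, α (k + 1) = lam * α k + 2 * s * ε + μ) (t : ℕ) :
    IsDominatedError P w (w - v t) ∧ ∑ i, |w i - v t i| ≤ α t := by
  induction t with
  | zero =>
    refine ⟨⟨fun i hi => by simpa [hv0] using hw i hi, fun i => by simp [hv0]⟩, ?_⟩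
    simpa [hv0, hα0] using hB.sum_abs_le_of_eq_sub_mulVec hτm₀ hτm hτ hρ hρ₁ hε hE hw hμ
      (by simpa using transpose_mulVec_sub_mulVec A Y y w 0)
  | succ k ih =>
    have hstep := hB.isDominatedError_sub_pursuitStep hτm₀ hτm hτ₀ hlam₁ hlam₂ hε hE hμ
      ih.1 ih.2
    rw [← transpose_mulVec_sub_mulVec, sub_sub, ← hvk k, ← hαk k] at hstep
    exact hstep

lemma matchingPursuit_threshold_bounds {ξ θ : ℝ} (hξ : 0 < ξ) (hθ : 1 ≤ θ) (s : ℕ) :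
    0 ≤ ξ / ((1 + ξ * θ) * s) ∧ ξ / ((1 + ξ * θ) * s) ≤ ξ * θ / ((1 + ξ * θ) * s) ∧
    0 ≤ ξ / ((1 + ξ) * s) ∧ ξ / ((1 + ξ) * s) ≤ ξ * θ / ((1 + ξ * θ) * s) ∧
    s * (ξ / ((1 + ξ * θ) * s) + ξ * θ / ((1 + ξ * θ) * s)) ≤ (ξ + ξ * θ) / (1 + ξ * θ) ∧
    2 * s * (ξ / ((1 + ξ) * s)) ≤ 2 * ξ / (1 + ξ) ∧
    s * (ξ * θ / ((1 + ξ * θ) * s)) ≤ ξ * θ / (1 + ξ * θ) := by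
  have hξθ : ξ ≤ ξ * θ := le_mul_of_one_le_right hξ.le hθ
  have hd : 0 ≤ (1 + ξ * θ) * s := mul_nonneg (by linarith) s.cast_nonneg
  have hd' : 0 ≤ (1 + ξ) * s := mul_nonneg (by linarith) s.cast_nonneg
  refine ⟨div_nonneg hξ.le hd, div_le_div_of_nonneg_right hξθ hd, div_nonneg hξ.le hd', ?_,
    ?_, ?_, natCast_mul_div_mul_natCast_le (div_nonneg (by linarith) (by linarith)) s⟩
  · rw [div_mul_eq_div_div, div_mul_eq_div_div]
    refine div_le_div_of_nonneg_right ?_ s.cast_nonneg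
    rw [div_le_div_iff₀ (by linarith) (by linarith)]
    nlinarith
  · rw [← add_div]
    exact natCast_mul_div_mul_natCast_le (div_nonneg (by linarith) (by linarith)) s
  · rw [mul_assoc, mul_div_assoc]
    gcongr
    exact natCast_mul_div_mul_natCast_le (div_nonneg hξ.le (by linarith)) s

theorem stmt12 {m n : ℕ} (A : Matrix (Fin m) (Fin n) ℝ) (Pplus : Finset (Fin n))
    (N : (Fin m → ℝ) → ℝ) (hN : IsNorm N)
    (s : ℕ) (ξ σ θ : ℝ) (hξ0 : 0 < ξ) (hξ1 : ξ < 1) (hσ : 0 ≤ σ) (hθ : 1 ≤ θ)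
    (Y : Matrix (Fin m) (Fin n) ℝ) (hY : VSGbarCert A Pplus s ξ σ θ N Y)
    (w : Fin n → ℝ) (μ : ℝ) (hw : ∀ i ∈ Pplus, 0 ≤ w i)
    (hμ : (∑ i, |w i|) - normS1 s w ≤ μ)
    (y : Fin m → ℝ) (δ : ℝ) (hδ : N (A.mulVec w - y) ≤ δ)
    (v : ℕ → Fin n → ℝ) (α : ℕ → ℝ)
    (hv0 : v 0 = 0)
    (hα0 : α 0 = (normS1 s (Y.transpose.mulVec y) + s * σ * δ + μ) /
      (1 - ξ * θ / (1 + ξ * θ)))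
    (hvk : ∀ k, v (k + 1) = fun i =>
      v k i +
        (if i ∈ Pplus then
            max ((Y.transpose.mulVec (y - A.mulVec (v k))) i
              - ξ / ((1 + ξ * θ) * s) * α k - σ * δ) 0
          else if 0 ≤ (Y.transpose.mulVec (y - A.mulVec (v k))) i then
            max ((Y.transpose.mulVec (y - A.mulVec (v k))) i
              - ξ / ((1 + ξ) * s) * α k - σ * δ) 0
          else -(max (|(Y.transpose.mulVec (y - A.mulVec (v k))) i|
              - ξ / ((1 + ξ) * s) * α k - σ * δ) 0)))
    (hαk : ∀ k, α (k + 1) =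
      max ((ξ + ξ * θ) / (1 + ξ * θ)) (2 * ξ / (1 + ξ)) * α k + 2 * s * σ * δ + μ) :
    ∀ t, (∀ i ∈ Pplus, 0 ≤ v t i) ∧
      (∑ i, |w i - v t i|) ≤
        (2 * s * σ * δ + μ) / (1 - max ((ξ + ξ * θ) / (1 + ξ * θ)) (2 * ξ / (1 + ξ))) +
          (max ((ξ + ξ * θ) / (1 + ξ * θ)) (2 * ξ / (1 + ξ))) ^ t *
            ((normS1 s (Y.transpose.mulVec y) + s * σ * δ + μ) / (1 - ξ * θ / (1 + ξ * θ)) -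
              (2 * s * σ * δ + μ) /
                (1 - max ((ξ + ξ * θ) / (1 + ξ * θ)) (2 * ξ / (1 + ξ)))) := by
  set lam := max ((ξ + ξ * θ) / (1 + ξ * θ)) (2 * ξ / (1 + ξ))
  obtain ⟨hτm₀, hτm, hτ₀, hτ, hlam₁, hlam₂, hρ⟩ := matchingPursuit_threshold_bounds hξ0 hθ s
  have hδ₀ : 0 ≤ δ := (hN.nonneg _).trans hδ
  have hE (i) : |(Yᵀ *ᵥ (y - A *ᵥ w)) i| ≤ σ * δ :=
    calc _ ≤ σ * N (y - A *ᵥ w) := hY.abs_transpose_mulVec_apply_le hN _ i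
      _ ≤ σ * δ := by rw [← neg_sub, hN.map_neg]; gcongr
  have hd : 0 < 1 + ξ * θ := by nlinarith
  have hlam : lam < 1 := max_lt ((div_lt_one hd).mpr (by linarith))
    ((div_lt_one (by linarith)).mpr (by linarith))
  have hinv := isDominatedError_matchingPursuit (v := v) (α := α) hY.entryBounds hτm₀ hτm hτ₀
    hτ (hlam₁.trans (le_max_left _ _)) (hlam₂.trans (le_max_right _ _)) hρ
    ((div_lt_one hd).mpr (by linarith)) (mul_nonneg hσ hδ₀) hE hw hμ hv0
    (by rw [hα0]; ring_nf)
    (fun k => by rw [hvk k]; ext i; simp [pursuitStep, softThreshold, sub_sub])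
    (fun k => by rw [hαk k]; ring)
  intro t
  obtain ⟨⟨-, hdom⟩, hsum⟩ := hinv t
  refine ⟨fun i hi => ?_, hsum.trans_eq ?_⟩
  · have := hdom i
    rw [abs_of_nonneg (hw i hi), Pi.sub_apply] at this
    linarith [le_abs_self (w i - v t i)]
  · rw [affine_recurrence_eq (a := α) hlam.ne (fun k => by rw [hαk k, add_assoc]) t, hα0]
end

section
/- Fix i ∈ {1,…,n}, a real number a, ξ ∈ [0,1), θ ≥ 1, ξ' ∈ (ξ,1), θ' ≥ θ, and set λ = (1+θξ)/(1+θ'ξ') and μ = (1+ξ)/(1+ξ'). Let η = θξ if i ∈ P_+ and η = ξ if i ∈ P_n, and η_+ = θ'ξ' if i ∈ P_+ and η_+ = ξ' if i ∈ P_n. Suppose z ∈ ℝ^n satisfies, for every subset I of {1,…,n} of cardinality s: (a) (1+θξ)·Σ_{j∈P_+∩I} max(z_j − δ_{ij}, 0) + (1+ξ)·Σ_{j∈P_n∩I} |z_j − δ_{ij}| + a ≤ ξ, and (b) (1+θξ)·Σ_{j∈P_+∩I} max(δ_{ij} − z_j, 0) + (1+ξ)·Σ_{j∈P_n∩I} |z_j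 − δ_{ij}| − a ≤ η, where δ_{ij} = 1 if j = i and 0 otherwise. Then for every subset I of {1,…,n} of cardinality s: (a') (1+θ'ξ')·Σ_{j∈P_+∩I} max(λz_j − δ_{ij}, 0) + (1+ξ')·Σ_{j∈P_n∩I} |μz_j − δ_{ij}| + a ≤ ξ', and (b') (1+θ'ξ')·Σ_{j∈P_+∩I} max(δ_{ij} − λz_j, 0) + (1+ξ')·Σ_{j∈P_n∩I} |μz_j − δ_{ij}| − a ≤ η_+. -/
open Finset

/-!
Write `c = 1 + θξ ≤ c' = 1 + θ'ξ'` (or `c = 1 + ξ ≤ c' = 1 + ξ'`) and `λ = c / c'`. Termwise,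
`c' (λ z - d) = c (z - d) - (c' - c) d`, so rescaling `z` by `λ` and the weight by `c'` never
increases the positive parts `max (z_j - δ_ij) 0`, and increases `max (δ_ij - z_j) 0` and
`|z_j - δ_ij|` by at most `(c' - c) δ_ij`. Summed over `I`, this extra term appears only for
`j = i`, in exactly one of the two sums, and `c' - c` is precisely the gap between the old and
the new right-hand sides `ξ, θξ` and `ξ', θ'ξ'`.
-/

section Rescale

variable {c c' d : ℝ}

lemma mul_div_mul_sub_eq (hc : 0 ≤ c) (hcc' : c ≤ c') (z : ℝ) :
    c' * (c / c' * z - d) = c * (z - d) - (c' - c) * d := by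
  have hcancel : c' * (c / c') = c :=
    mul_div_cancel_of_imp' fun h0 => le_antisymm (h0 ▸ hcc') hc
  linear_combination z * hcancel

lemma mul_max_div_mul_sub_le (hc : 0 ≤ c) (hcc' : c ≤ c') (hd : 0 ≤ d) (z : ℝ) :
    c' * max (c / c' * z - d) 0 ≤ c * max (z - d) 0 := by
  rw [mul_max_of_nonneg _ _ (hc.trans hcc'), mul_max_of_nonneg _ _ hc, mul_zero, mul_zero,
    mul_div_mul_sub_eq hc hcc']
  gcongr
  exact sub_le_self _ (mul_nonneg (sub_nonneg.mpr hcc') hd)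

lemma mul_max_sub_div_mul_le (hc : 0 ≤ c) (hcc' : c ≤ c') (hd : 0 ≤ d) (z : ℝ) :
    c' * max (d - c / c' * z) 0 ≤ c * max (d - z) 0 + (c' - c) * d := by
  have hrescale : c' * (d - c / c' * z) = c * (d - z) + (c' - c) * d := by
    linear_combination -mul_div_mul_sub_eq (d := d) hc hcc' z
  have hgap : 0 ≤ (c' - c) * d := mul_nonneg (sub_nonneg.mpr hcc') hd
  rw [mul_max_of_nonneg _ _ (hc.trans hcc'), mul_max_of_nonneg _ _ hc, mul_zero, mul_zero,
    hrescale]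
  exact max_le (by gcongr; exact le_max_left _ _) (by positivity)

lemma mul_abs_div_mul_sub_le (hc : 0 ≤ c) (hcc' : c ≤ c') (hd : 0 ≤ d) (z : ℝ) :
    c' * |c / c' * z - d| ≤ c * |z - d| + (c' - c) * d := by
  have hc' : c' * |c / c' * z - d| = |c' * (c / c' * z - d)| := by
    rw [abs_mul, abs_of_nonneg (hc.trans hcc')]
  rw [hc', mul_div_mul_sub_eq hc hcc', sub_eq_add_neg]
  refine (abs_add_le _ _).trans_eq ?_
  rw [abs_neg, abs_mul, abs_mul, abs_of_nonneg hc, abs_of_nonneg (sub_nonneg.mpr hcc'),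
    abs_of_nonneg hd]

end Rescale

section RescaleSum

variable {ι : Type*} {c c' : ℝ} (S : Finset ι) (z d : ι → ℝ)

lemma mul_sum_max_div_mul_sub_le (hc : 0 ≤ c) (hcc' : c ≤ c') (hd : ∀ j ∈ S, 0 ≤ d j) :
    c' * ∑ j ∈ S, max (c / c' * z j - d j) 0 ≤ c * ∑ j ∈ S, max (z j - d j) 0 := by
  rw [mul_sum, mul_sum]
  exact sum_le_sum fun j hj => mul_max_div_mul_sub_le hc hcc' (hd j hj) (z j)

lemma mul_sum_max_sub_div_mul_le (hc : 0 ≤ c) (hcc' : c ≤ c') (hd : ∀ j ∈ S, 0 ≤ d j) :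
    c' * ∑ j ∈ S, max (d j - c / c' * z j) 0 ≤
      c * ∑ j ∈ S, max (d j - z j) 0 + (c' - c) * ∑ j ∈ S, d j := by
  rw [mul_sum, mul_sum, mul_sum, ← sum_add_distrib]
  exact sum_le_sum fun j hj => mul_max_sub_div_mul_le hc hcc' (hd j hj) (z j)

lemma mul_sum_abs_div_mul_sub_le (hc : 0 ≤ c) (hcc' : c ≤ c') (hd : ∀ j ∈ S, 0 ≤ d j) :
    c' * ∑ j ∈ S, |c / c' * z j - d j| ≤
      c * ∑ j ∈ S, |z j - d j| + (c' - c) * ∑ j ∈ S, d j := by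
  rw [mul_sum, mul_sum, mul_sum, ← sum_add_distrib]
  exact sum_le_sum fun j hj => mul_abs_div_mul_sub_le hc hcc' (hd j hj) (z j)

end RescaleSum

theorem stmt13_general {n : ℕ} (Pplus : Finset (Fin n)) (s : ℕ)
    (i : Fin n) (a ξ θ ξ' θ' : ℝ)
    (hξ0 : 0 ≤ ξ) (hθ : 1 ≤ θ)
    (hξ'1 : ξ < ξ') (hθ' : θ ≤ θ')
    (z : Fin n → ℝ)
    (h : ∀ I : Finset (Fin n), I.card = s →
      ((1 + θ * ξ) * ∑ j ∈ I ∩ Pplus, max (z j - (if j = i then 1 else 0)) 0 +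
          (1 + ξ) * ∑ j ∈ I ∩ Pplusᶜ, |z j - (if j = i then 1 else 0)| + a ≤ ξ) ∧
      ((1 + θ * ξ) * ∑ j ∈ I ∩ Pplus, max ((if j = i then 1 else 0) - z j) 0 +
          (1 + ξ) * ∑ j ∈ I ∩ Pplusᶜ, |z j - (if j = i then 1 else 0)| - a ≤
            if i ∈ Pplus then θ * ξ else ξ)) :
    ∀ I : Finset (Fin n), I.card = s →
      ((1 + θ' * ξ') * ∑ j ∈ I ∩ Pplus,
            max ((1 + θ * ξ) / (1 + θ' * ξ') * z j - (if j = i then 1 else 0)) 0 +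
          (1 + ξ') * ∑ j ∈ I ∩ Pplusᶜ,
            |(1 + ξ) / (1 + ξ') * z j - (if j = i then 1 else 0)| + a ≤ ξ') ∧
      ((1 + θ' * ξ') * ∑ j ∈ I ∩ Pplus,
            max ((if j = i then 1 else 0) - (1 + θ * ξ) / (1 + θ' * ξ') * z j) 0 +
          (1 + ξ') * ∑ j ∈ I ∩ Pplusᶜ,
            |(1 + ξ) / (1 + ξ') * z j - (if j = i then 1 else 0)| - a ≤
              if i ∈ Pplus then θ' * ξ' else ξ') := by
  intro I hI
  obtain ⟨ha, hb⟩ := h I hI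
  have hc : 0 ≤ 1 + θ * ξ := by nlinarith
  have hcc' : 1 + θ * ξ ≤ 1 + θ' * ξ' := by nlinarith
  have hm : 0 ≤ 1 + ξ := by linarith
  have hmm' : 1 + ξ ≤ 1 + ξ' := by linarith
  have hδ (j : Fin n) : (0 : ℝ) ≤ if j = i then 1 else 0 := by positivity
  have hA := mul_sum_max_div_mul_sub_le (I ∩ Pplus) z _ hc hcc' fun j _ => hδ j
  have hC := mul_sum_max_sub_div_mul_le (I ∩ Pplus) z _ hc hcc' fun j _ => hδ j
  have hB := mul_sum_abs_div_mul_sub_le (I ∩ Pplusᶜ) z _ hm hmm' fun j _ => hδ j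
  rw [sum_ite_eq'] at hB hC
  by_cases hiP : i ∈ Pplus <;> by_cases hiI : i ∈ I <;>
    simp only [hiP, hiI, mem_inter, mem_compl, if_true, if_false, and_true, and_false,
      not_true, not_false_eq_true] at hB hC hb ⊢ <;>
    constructor <;> linarith

theorem stmt13 {n : ℕ} (Pplus : Finset (Fin n)) (s : ℕ) (hs : 0 < s) (hsn : s ≤ n)
    (i : Fin n) (a ξ θ ξ' θ' : ℝ)
    (hξ0 : 0 ≤ ξ) (hξ1 : ξ < 1) (hθ : 1 ≤ θ)
    (hξ'1 : ξ < ξ') (hξ'2 : ξ' < 1) (hθ' : θ ≤ θ')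
    (z : Fin n → ℝ)
    (h : ∀ I : Finset (Fin n), I.card = s →
      ((1 + θ * ξ) * ∑ j ∈ I ∩ Pplus, max (z j - (if j = i then 1 else 0)) 0 +
          (1 + ξ) * ∑ j ∈ I ∩ Pplusᶜ, |z j - (if j = i then 1 else 0)| + a ≤ ξ) ∧
      ((1 + θ * ξ) * ∑ j ∈ I ∩ Pplus, max ((if j = i then 1 else 0) - z j) 0 +
          (1 + ξ) * ∑ j ∈ I ∩ Pplusᶜ, |z j - (if j = i then 1 else 0)| - a ≤
            if i ∈ Pplus then θ * ξ else ξ)) :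
    ∀ I : Finset (Fin n), I.card = s →
      ((1 + θ' * ξ') * ∑ j ∈ I ∩ Pplus,
            max ((1 + θ * ξ) / (1 + θ' * ξ') * z j - (if j = i then 1 else 0)) 0 +
          (1 + ξ') * ∑ j ∈ I ∩ Pplusᶜ,
            |(1 + ξ) / (1 + ξ') * z j - (if j = i then 1 else 0)| + a ≤ ξ') ∧
      ((1 + θ' * ξ') * ∑ j ∈ I ∩ Pplus,
            max ((if j = i then 1 else 0) - (1 + θ * ξ) / (1 + θ' * ξ') * z j) 0 +
          (1 + ξ') * ∑ j ∈ I ∩ Pplusᶜ,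
            |(1 + ξ) / (1 + ξ') * z j - (if j = i then 1 else 0)| - a ≤
              if i ∈ Pplus then θ' * ξ' else ξ') :=
  stmt13_general Pplus s i a ξ θ ξ' θ' hξ0 hθ hξ'1 hθ' z h
end

section
/- Let {1,…,n} be partitioned into disjoint sets P_+ and P_n, let θ ≥ 1, and define Ψ_θ(x) = Σ_{i∈P_+} max(−x_i, θ·x_i) + Σ_{i∈P_n} |x_i| for x ∈ ℝ^n. Then the set {x ∈ ℝ^n : Ψ_θ(x) ≤ 1} equals the convex hull of the finite set consisting of the vectors e_i and −e_i for i ∈ P_n, and the vectors −e_i and θ^{−1}·e_i for i ∈ P_+, where e_1,…,e_n are the standard basis vectors of ℝ^n. -/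
/-!
Write `Ψ_c x = asymL1 c x = ∑ i, max (-x i) (c i * x i)`; with `c i = θ` on `P₊` and `c i = 1` elsewhere (where the
term is `|x i|`) this is the `Ψ_θ` of the statement. As a sum of maxima of linear forms `Ψ_c` is
convex, and it equals `1` at every vertex `(c i)⁻¹ • e i` and `-e i`, so the convex hull lies in the
unit sublevel set. Conversely `x i • e i = max (-x i) (c i * x i) • v i`, where `v i` is `(c i)⁻¹ • e i`
or `-e i` according to the sign of `x i`, so `x` is a combination of vertices with nonnegative weights
of total mass `Ψ_c x ≤ 1`; the remaining mass is put on `0`, which lies on the segment from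
`(c i)⁻¹ • e i` to `-e i`.
-/

open Finset

open Set

section Convexity

variable {𝕜 E β ι : Type*}

theorem ConvexOn.sum [Semiring 𝕜] [PartialOrder 𝕜] [AddCommMonoid E] [SMul 𝕜 E]
    [AddCommMonoid β] [PartialOrder β] [IsOrderedAddMonoid β] [Module 𝕜 β]
    {s : Set E} {t : Finset ι} {f : ι → E → β} (hs : Convex 𝕜 s)
    (hf : ∀ i ∈ t, ConvexOn 𝕜 s (f i)) : ConvexOn 𝕜 s (fun x => ∑ i ∈ t, f i x) := by
  classical
  induction t using Finset.induction_on with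
  | empty => simpa using convexOn_const 0 hs
  | insert j t hj ih =>
    simp only [sum_insert hj]
    exact (hf j (mem_insert_self j t)).add (ih fun i hi => hf i (mem_insert_of_mem hi))

variable [Field 𝕜] [LinearOrder 𝕜] [IsStrictOrderedRing 𝕜] [AddCommGroup E] [Module 𝕜 E]

theorem Convex.sum_smul_mem_of_zero_mem {K : Set E} (hK : Convex 𝕜 K) (h0 : (0 : E) ∈ K)
    {t : Finset ι} {a : ι → 𝕜} {v : ι → E} (ha : ∀ i ∈ t, 0 ≤ a i) (hsum : ∑ i ∈ t, a i ≤ 1)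
    (hv : ∀ i ∈ t, v i ∈ K) : ∑ i ∈ t, a i • v i ∈ K := by
  rcases (sum_nonneg ha).eq_or_lt with hS | hS
  · rwa [sum_eq_zero fun i hi => by rw [(sum_eq_zero_iff_of_nonneg ha).1 hS.symm i hi, zero_smul]]
  · have hnormalize :
        ∑ i ∈ t, a i • v i = (∑ i ∈ t, a i) • ∑ i ∈ t, (a i / ∑ j ∈ t, a j) • v i := by
      rw [smul_sum]
      refine sum_congr rfl fun i _ => ?_
      rw [smul_smul, mul_div_cancel₀ _ hS.ne']
    rw [hnormalize]
    refine hK.smul_mem_of_zero_mem h0 (hK.sum_mem (fun i hi => div_nonneg (ha i hi) hS.le) ?_ hv)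
      ⟨hS.le, hsum⟩
    rw [← sum_div, div_self hS.ne']

theorem zero_mem_segment_inv_smul_neg {c : 𝕜} (hc : 0 < c) (e : E) :
    (0 : E) ∈ segment 𝕜 (c⁻¹ • e) (-e) := by
  refine ⟨c / (1 + c), 1 / (1 + c), by positivity, by positivity, by field_simp; ring, ?_⟩
  have hweight : c / (1 + c) * c⁻¹ = 1 / (1 + c) := by field_simp
  rw [smul_smul, hweight, smul_neg, add_neg_cancel]

end Convexity

section AsymL1

variable {ι : Type*} [Fintype ι]

noncomputable def asymL1 (c x : ι → ℝ) : ℝ := ∑ i, max (-x i) (c i * x i)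

theorem convexOn_asymL1 (c : ι → ℝ) : ConvexOn ℝ univ (asymL1 c) :=
  ConvexOn.sum convex_univ fun i _ =>
    (LinearMap.convexOn (-LinearMap.proj (R := ℝ) (φ := fun _ : ι => ℝ) i) convex_univ).sup
      (LinearMap.convexOn (c i • LinearMap.proj (R := ℝ) (φ := fun _ : ι => ℝ) i) convex_univ)

theorem convex_setOf_asymL1_le (c : ι → ℝ) (r : ℝ) : Convex ℝ {x | asymL1 c x ≤ r} := by
  simpa using (convexOn_asymL1 c).convex_le r

theorem asymL1_single [DecidableEq ι] (c : ι → ℝ) (i : ι) (r : ℝ) :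
    asymL1 c (Pi.single i r) = max (-r) (c i * r) := by
  rw [asymL1, sum_eq_single i (fun j _ hj => by simp [Pi.single_eq_of_ne hj]) (by simp)]
  simp

theorem max_neg_mul_nonneg {c : ℝ} (hc : 0 ≤ c) (a : ℝ) : 0 ≤ max (-a) (c * a) := by
  rcases le_total 0 a with ha | ha
  · exact le_max_of_le_right (mul_nonneg hc ha)
  · exact le_max_of_le_left (neg_nonneg.2 ha)

theorem max_neg_mul_smul_ite {E : Type*} [AddCommGroup E] [Module ℝ E] {c : ℝ} (hc : 0 < c)
    (a : ℝ) (e : E) : max (-a) (c * a) • (if 0 ≤ a then c⁻¹ • e else -e) = a • e := by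
  split_ifs with ha
  · rw [max_eq_right (by nlinarith), smul_smul, mul_right_comm, mul_inv_cancel₀ hc.ne', one_mul]
  · rw [max_eq_left (by nlinarith), neg_smul_neg]

theorem setOf_asymL1_le_one_eq_convexHull [Nonempty ι] [DecidableEq ι] {c : ι → ℝ}
    (hc : ∀ i, 0 < c i) :
    {x | asymL1 c x ≤ 1} = convexHull ℝ
      (range (fun i => (c i)⁻¹ • Pi.single i (1 : ℝ)) ∪ range (fun i => -Pi.single i (1 : ℝ))) := by
  set V := range (fun i => (c i)⁻¹ • Pi.single i (1 : ℝ)) ∪ range (fun i => -Pi.single i (1 : ℝ))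
  apply Set.Subset.antisymm
  · intro x hx
    have h0 : (0 : ι → ℝ) ∈ convexHull ℝ V := by
      obtain ⟨i⟩ := ‹Nonempty ι›
      exact segment_subset_convexHull (mem_union_left _ (mem_range_self i))
        (mem_union_right _ (mem_range_self i)) (zero_mem_segment_inv_smul_neg (hc i) _)
    have hx_eq : ∑ i, max (-x i) (c i * x i) •
        (if 0 ≤ x i then (c i)⁻¹ • Pi.single i (1 : ℝ) else -Pi.single i 1) = x := by
      simp_rw [max_neg_mul_smul_ite (hc _), ← Pi.single_smul', smul_eq_mul, mul_one]
      exact univ_sum_single x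
    rw [← hx_eq]
    refine (convex_convexHull ℝ V).sum_smul_mem_of_zero_mem h0
      (fun i _ => max_neg_mul_nonneg (hc i).le _) hx fun i _ => subset_convexHull ℝ V ?_
    split_ifs
    · exact mem_union_left _ (mem_range_self i)
    · exact mem_union_right _ (mem_range_self i)
  · refine convexHull_min ?_ (convex_setOf_asymL1_le c 1)
    rintro _ (⟨i, rfl⟩ | ⟨i, rfl⟩) <;> simp only [mem_ofPred_eq]
    · rw [← Pi.single_smul', smul_eq_mul, mul_one, asymL1_single, mul_inv_cancel₀ (hc i).ne']
      exact max_le (by linarith [inv_pos.2 (hc i)]) le_rfl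
    · rw [← Pi.single_neg, asymL1_single]
      exact max_le (by simp) (by linarith [hc i])

end AsymL1

theorem stmt17 {n : ℕ} (hn : 0 < n) (Pplus : Finset (Fin n)) (θ : ℝ) (hθ : 1 ≤ θ) :
    {x : Fin n → ℝ |
        ∑ i ∈ Pplus, max (-x i) (θ * x i) + ∑ i ∈ Pplusᶜ, |x i| ≤ 1} =
      convexHull ℝ
        (((fun i : Fin n => (Pi.single i (1 : ℝ) : Fin n → ℝ)) '' ↑(Pplusᶜ : Finset (Fin n))) ∪
          ((fun i : Fin n => -(Pi.single i (1 : ℝ) : Fin n → ℝ)) '' ↑(Pplusᶜ : Finset (Fin n))) ∪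
          ((fun i : Fin n => -(Pi.single i (1 : ℝ) : Fin n → ℝ)) '' ↑Pplus) ∪
          ((fun i : Fin n => θ⁻¹ • (Pi.single i (1 : ℝ) : Fin n → ℝ)) '' ↑Pplus)) := by
  have : Nonempty (Fin n) := ⟨⟨0, hn⟩⟩
  set c : Fin n → ℝ := fun i => if i ∈ Pplus then θ else 1 with hc_def
  have hc : ∀ i, 0 < c i := fun i => by
    simp only [hc_def]; split_ifs <;> linarith
  have hΨ : ∀ x : Fin n → ℝ,
      ∑ i ∈ Pplus, max (-x i) (θ * x i) + ∑ i ∈ Pplusᶜ, |x i| = asymL1 c x := fun x => by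
    rw [asymL1, ← sum_add_sum_compl Pplus]
    congr 1
    · exact sum_congr rfl fun i hi => by simp [hc_def, hi]
    · exact sum_congr rfl fun i hi => by simp [hc_def, mem_compl.1 hi, abs_eq_max_neg, max_comm]
  have hsplit : ∀ f : Fin n → Fin n → ℝ, range f = f '' ↑Pplus ∪ f '' ↑Pplusᶜ := fun f => by
    rw [← image_union, coe_compl, union_compl_self, image_univ]
  have hvertex_pos : (fun i => (c i)⁻¹ • Pi.single i (1 : ℝ)) '' ↑Pplus =
      (fun i => θ⁻¹ • Pi.single i 1) '' ↑Pplus :=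
    Set.image_congr fun i hi => by simp [hc_def, mem_coe.1 hi]
  have hvertex_compl : (fun i => (c i)⁻¹ • Pi.single i (1 : ℝ)) '' ↑Pplusᶜ =
      (fun i => Pi.single i 1) '' ↑Pplusᶜ :=
    Set.image_congr fun i hi => by simp [hc_def, mem_compl.1 (mem_coe.1 hi)]
  simp_rw [hΨ]
  rw [setOf_asymL1_le_one_eq_convexHull hc, hsplit, hsplit, hvertex_pos, hvertex_compl]
  congr 1
  ac_rfl
end

section
/- Let A be an m×n real matrix and s a positive integer. Suppose there exist a subset I of {1,…,n} with Card(I) ≤ s, signs ε_i ∈ {−1, 1} for i ∈ I ∩ P_n, and a vector x ∈ ℝ^n such that Ax = 0, x_i ≤ 0 for all i ∈ P_+ ∖ I, Σ_{i∉I} |x_i| ≤ 1, and Σ_{i∈I∩P_+} x_i + Σ_{i∈I∩P_n} ε_i·x_i ≥ 1. Then A is not s-semigood. -/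
/-!
A kernel vector `x` as in the hypotheses yields an `s`-sparse `w` (the part of `x` on `I`, with
its negative entries in `P₊` set to `0`) for which `z = w - x` is another admissible point with
`Az = Aw`. Entrywise `|w - x| - |w|` is `-x_i` on `I ∩ P₊`, `-|x_i|` on `I ∖ P₊` and `|x_i|` off
`I`, so `‖z‖₁ ≤ ‖w‖₁ + 1 - 1`, while `z ≠ w` because `x ≠ 0`.
-/

open Finset

section HeadPart

variable {n : ℕ} (Pplus I : Finset (Fin n)) (x : Fin n → ℝ)

def headPart : Fin n → ℝ :=
  fun i => if i ∈ I then (if i ∈ Pplus then max (x i) 0 else x i) else 0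

theorem card_support_headPart_le :
    (univ.filter fun i => headPart Pplus I x i ≠ 0).card ≤ I.card :=
  card_le_card fun i hi => by
    by_contra hiI
    simp [headPart, hiI] at hi

theorem headPart_nonneg {i : Fin n} (hi : i ∈ Pplus) : 0 ≤ headPart Pplus I x i := by
  unfold headPart
  split_ifs <;> simp

variable {Pplus I x}

theorem headPart_sub_nonneg (hsign : ∀ i ∈ Pplus \ I, x i ≤ 0) {i : Fin n} (hi : i ∈ Pplus) :
    0 ≤ headPart Pplus I x i - x i := by
  by_cases hiI : i ∈ I
  · simp [headPart, hiI, hi]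
  · simpa [headPart, hiI] using hsign i (mem_sdiff.mpr ⟨hi, hiI⟩)

variable (Pplus I x)

theorem abs_headPart_sub (i : Fin n) :
    |headPart Pplus I x i - x i| = |headPart Pplus I x i| +
      if i ∈ I then (if i ∈ Pplus then -x i else -|x i|) else |x i| := by
  unfold headPart
  split_ifs
  · rcases le_total (x i) 0 with h | h <;> simp [h, abs_of_nonpos, abs_of_nonneg]
  · simp
  · simp

theorem sum_abs_headPart_sub :
    ∑ i, |headPart Pplus I x i - x i| = ∑ i, |headPart Pplus I x i| + ∑ i ∈ Iᶜ, |x i| -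
      (∑ i ∈ I ∩ Pplus, x i + ∑ i ∈ I ∩ Pplusᶜ, |x i|) := by
  simp only [abs_headPart_sub, sum_add_distrib, sum_ite, filter_mem_eq_inter, univ_inter,
    filter_notMem_eq_sdiff, sdiff_eq_inter_compl, sum_neg_distrib]
  ring

end HeadPart

theorem SemiGood.signed_head_lt_tail {m n : ℕ} {A : Matrix (Fin m) (Fin n) ℝ}
    {Pplus : Finset (Fin n)} {s : ℕ} (hA : SemiGood A Pplus s) {I : Finset (Fin n)} (hI : I.card ≤ s) {x : Fin n → ℝ}
    (hker : A.mulVec x = 0) (hx : x ≠ 0) (hsign : ∀ i ∈ Pplus \ I, x i ≤ 0) :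
    ∑ i ∈ I ∩ Pplus, x i + ∑ i ∈ I ∩ Pplusᶜ, |x i| < ∑ i ∈ Iᶜ, |x i| := by
  by_contra! hle
  set w := headPart Pplus I x
  -- `w - x` is an admissible competitor of the `s`-sparse `w` with no larger `ℓ₁`-norm.
  have hz : w - x = w := by
    refine hA w ((card_support_headPart_le Pplus I x).trans hI)
      (fun i hi => headPart_nonneg Pplus I x hi) (w - x) (by simp [Matrix.mulVec_sub, hker])
      (fun i hi => headPart_sub_nonneg hsign hi) ?_
    simp only [Pi.sub_apply]
    linarith [sum_abs_headPart_sub Pplus I x]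
  exact hx (by simpa using hz)

theorem stmt19_general {m n : ℕ} (A : Matrix (Fin m) (Fin n) ℝ) (Pplus : Finset (Fin n))
    (s : ℕ)
    (I : Finset (Fin n)) (hI : I.card ≤ s)
    (ε : Fin n → ℝ) (hε : ∀ i ∈ I ∩ Pplusᶜ, ε i = 1 ∨ ε i = -1)
    (x : Fin n → ℝ) (hker : A.mulVec x = 0)
    (hsign : ∀ i ∈ Pplus \ I, x i ≤ 0)
    (htail : ∑ i ∈ Iᶜ, |x i| ≤ 1)
    (hbig : 1 ≤ ∑ i ∈ I ∩ Pplus, x i + ∑ i ∈ I ∩ Pplusᶜ, ε i * x i) :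
    ¬ SemiGood A Pplus s := by
  intro hA
  have hsigned : ∑ i ∈ I ∩ Pplusᶜ, ε i * x i ≤ ∑ i ∈ I ∩ Pplusᶜ, |x i| :=
    sum_le_sum fun i hi => by
      rcases hε i hi with h | h <;> simp [h, le_abs_self, neg_le_abs]
  have hx : x ≠ 0 := by
    rintro rfl
    norm_num at hbig
  linarith [hA.signed_head_lt_tail hI hker hx hsign]

theorem stmt19 {m n : ℕ} (A : Matrix (Fin m) (Fin n) ℝ) (Pplus : Finset (Fin n))
    (s : ℕ) (hs : 0 < s)
    (I : Finset (Fin n)) (hI : I.card ≤ s)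
    (ε : Fin n → ℝ) (hε : ∀ i ∈ I ∩ Pplusᶜ, ε i = 1 ∨ ε i = -1)
    (x : Fin n → ℝ) (hker : A.mulVec x = 0)
    (hsign : ∀ i ∈ Pplus \ I, x i ≤ 0)
    (htail : ∑ i ∈ Iᶜ, |x i| ≤ 1)
    (hbig : 1 ≤ ∑ i ∈ I ∩ Pplus, x i + ∑ i ∈ I ∩ Pplusᶜ, ε i * x i) :
    ¬ SemiGood A Pplus s :=
  stmt19_general A Pplus s I hI ε hε x hker hsign htail hbig
end
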